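/- Let n ≥ 1 be an integer, Δ > 0, T = nΔ, h_1, h_2 ∈ (0, 1), and A > 0, ρ > 0. Let k : {0, …, n−1} → ℝ satisfy: (i) |k(j)| ≤ A/(h_1 h_2) for all j; (ii) |k(j)| ≤ A(1/(jΔ) + 1) for all j ≥ 1; (iii) |k(j)| ≤ (A/(h_1 h_2)²)·e^{−ρ j Δ} for all j. Then there exist constants C > 0 and T_0 > 0, depending only on A and ρ, such that for all T ≥ T_0: (Δ²/T²)·∑_{j=0}^{n−1} (n − j)|k(j)| ≤ (C/T)·(1 + |log h_1| + |log h_2|) + (C/T)·Δ/(h_1 h_2). -/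

import Mathlib

/-!
Since `n - j ≤ n`, it suffices to bound the Riemann sum `Δ ∑_{j<n} |k j|` by
`C (1 + |log δ| + Δ/δ)` with `δ = h₁h₂`. Split the lags according to `jΔ`: on `jΔ ≤ δ` use (i)
(about `δ/Δ` lags of size `A/δ`); on `δ < jΔ ≤ R` use (ii), whose `1/(jΔ)` part is a harmonic sum
of size `1 + log (R/δ)`; beyond `R` use (iii), a geometric tail of size `e^{-ρR}(1/ρ + Δ)/δ²`.
The cutoff `R = δ + 2|log δ|/ρ` makes `e^{-ρR} ≤ δ²` while `log (R/δ)` stays `O(|log δ|)`.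
-/

open Finset Real

theorem natCast_card_mul_le_of_forall_mem_Icc {t : Finset ℕ} {Δ u v : ℝ} (hΔ : 0 < Δ)
    (hu : 0 ≤ u) (huv : u ≤ v) (ht : ∀ j ∈ t, u ≤ j * Δ ∧ (j : ℝ) * Δ ≤ v) :
    (#t : ℝ) * Δ ≤ v - u + Δ := by
  have hsub : t ⊆ Icc ⌈u / Δ⌉₊ ⌊v / Δ⌋₊ := fun j hj => mem_Icc.2
    ⟨Nat.ceil_le.2 ((div_le_iff₀ hΔ).2 (ht j hj).1), Nat.le_floor ((le_div_iff₀ hΔ).2 (ht j hj).2)⟩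
  have hceil : ⌈u / Δ⌉₊ ≤ ⌊v / Δ⌋₊ + 1 :=
    (Nat.ceil_le_floor_add_one _).trans (by gcongr)
  have hcard : (#t : ℝ) ≤ v / Δ + 1 - u / Δ := calc
    (#t : ℝ) ≤ ((⌊v / Δ⌋₊ + 1 - ⌈u / Δ⌉₊ : ℕ) : ℝ) := by
      rw [← Nat.card_Icc]; exact_mod_cast card_le_card hsub
    _ = ⌊v / Δ⌋₊ + 1 - ⌈u / Δ⌉₊ := by push_cast [Nat.cast_sub hceil]; ring
    _ ≤ v / Δ + 1 - u / Δ := by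
      gcongr
      · exact Nat.floor_le (div_nonneg (hu.trans huv) hΔ.le)
      · exact Nat.le_ceil _
  calc (#t : ℝ) * Δ ≤ (v / Δ + 1 - u / Δ) * Δ := by gcongr
    _ = v - u + Δ := by field_simp; ring

theorem sum_Ioc_inv_eq_harmonic_sub {a b : ℕ} (hab : a ≤ b) :
    ∑ j ∈ Ioc a b, (j : ℚ)⁻¹ = harmonic b - harmonic a := by
  have hIcc (c : ℕ) : Icc 1 c = Ioc 0 c := Icc_succ_left_eq_Ioc 0 c
  rw [harmonic_eq_sum_Icc, harmonic_eq_sum_Icc, hIcc, hIcc,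
    ← sum_Ioc_consecutive _ (Nat.zero_le a) hab, add_sub_cancel_left]

theorem sum_inv_le_one_add_log_div {t : Finset ℕ} {x y : ℝ} (hx : 0 < x) (hxy : x ≤ y)
    (ht : ∀ j ∈ t, x < j ∧ (j : ℝ) ≤ y) : ∑ j ∈ t, (j : ℝ)⁻¹ ≤ 1 + log (y / x) := by
  have hsub : t ⊆ Ioc ⌊x⌋₊ ⌊y⌋₊ := fun j hj => mem_Ioc.2
    ⟨(Nat.floor_lt hx.le).2 (ht j hj).1, Nat.le_floor (ht j hj).2⟩
  calc ∑ j ∈ t, (j : ℝ)⁻¹ ≤ ∑ j ∈ Ioc ⌊x⌋₊ ⌊y⌋₊, (j : ℝ)⁻¹ :=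
        sum_le_sum_of_subset_of_nonneg hsub fun _ _ _ => by positivity
    _ = harmonic ⌊y⌋₊ - harmonic ⌊x⌋₊ := by
        rw [← Rat.cast_sub, ← sum_Ioc_inv_eq_harmonic_sub (Nat.floor_mono hxy)]
        push_cast; rfl
    _ ≤ 1 + log y - log x := by
        rcases lt_or_ge y 1 with hy | hy
        · have hy0 : ⌊y⌋₊ = 0 := Nat.floor_eq_zero.2 hy
          have hx0 : ⌊x⌋₊ = 0 := Nat.floor_eq_zero.2 (hxy.trans_lt hy)
          simp only [hy0, hx0, sub_self, harmonic_zero, Rat.cast_zero]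
          linarith [log_le_log hx hxy]
        · linarith [harmonic_floor_le_one_add_log y hy, log_le_harmonic_floor x hx.le]
    _ = 1 + log (y / x) := by rw [log_div (hx.trans_le hxy).ne' hx.ne']; ring

theorem sum_pow_le_pow_div_one_sub {t : Finset ℕ} {r : ℝ} {m : ℕ} (hr0 : 0 ≤ r) (hr1 : r < 1)
    (ht : ∀ j ∈ t, m ≤ j) : ∑ j ∈ t, r ^ j ≤ r ^ m / (1 - r) := calc
  ∑ j ∈ t, r ^ j ≤ ∑ j ∈ Ico m (t.sup id + 1), r ^ j :=
      sum_le_sum_of_subset_of_nonneg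
        (fun j hj => mem_Ico.2 ⟨ht j hj, Nat.lt_succ_of_le (le_sup (f := id) hj)⟩)
        fun _ _ _ => by positivity
  _ ≤ r ^ m / (1 - r) := geom_sum_Ico_le_of_lt_one hr0 hr1

theorem Real.div_one_sub_exp_neg_le {x : ℝ} (hx : 0 < x) : x / (1 - exp (-x)) ≤ 1 + x := by
  have hexp : exp (-x) * exp x = 1 := by rw [← exp_add, neg_add_cancel, exp_zero]
  have hlt : exp (-x) < 1 := exp_lt_one_iff.2 (by linarith)
  rw [div_le_iff₀ (by linarith)]
  nlinarith [add_one_le_exp x, exp_pos (-x)]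

theorem mul_sum_exp_neg_le_of_lt {t : Finset ℕ} {ρ Δ R : ℝ} (hρ : 0 < ρ) (hΔ : 0 < Δ)
    (hR : 0 ≤ R) (ht : ∀ j ∈ t, R < j * Δ) :
    Δ * ∑ j ∈ t, exp (-ρ * j * Δ) ≤ exp (-ρ * R) * (1 / ρ + Δ) := by
  set r := exp (-(ρ * Δ))
  set m := ⌊R / Δ⌋₊ + 1
  have hr1 : r < 1 := exp_lt_one_iff.2 (by nlinarith)
  have hpow (j : ℕ) : exp (-ρ * j * Δ) = r ^ j := by rw [← exp_nat_mul]; ring_nf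
  have hm : ∀ j ∈ t, m ≤ j := fun j hj =>
    (Nat.floor_lt (div_nonneg hR hΔ.le)).2 ((div_lt_iff₀ hΔ).2 (ht j hj))
  have hrm : r ^ m ≤ exp (-ρ * R) := by
    have := Nat.lt_floor_add_one (R / Δ)
    rw [div_lt_iff₀ hΔ] at this
    rw [← hpow, exp_le_exp]
    push_cast [m]; nlinarith
  have hΔr : Δ / (1 - r) ≤ 1 / ρ + Δ := by
    have := div_one_sub_exp_neg_le (mul_pos hρ hΔ)
    calc Δ / (1 - r) = 1 / ρ * (ρ * Δ / (1 - r)) := by field_simp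
      _ ≤ 1 / ρ * (1 + ρ * Δ) := by gcongr
      _ = 1 / ρ + Δ := by field_simp
  calc Δ * ∑ j ∈ t, exp (-ρ * j * Δ) = Δ * ∑ j ∈ t, r ^ j := by simp only [hpow]
    _ ≤ Δ * (r ^ m / (1 - r)) := by gcongr; exact sum_pow_le_pow_div_one_sub (exp_pos _).le hr1 hm
    _ = r ^ m * (Δ / (1 - r)) := by ring
    _ ≤ exp (-ρ * R) * (1 / ρ + Δ) := by gcongr

theorem mul_sum_inv_mul_le_one_add_log_div {t : Finset ℕ} {Δ u v : ℝ} (hΔ : 0 < Δ) (hu : 0 < u)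
    (huv : u ≤ v) (ht : ∀ j ∈ t, u < j * Δ ∧ (j : ℝ) * Δ ≤ v) :
    Δ * ∑ j ∈ t, 1 / ((j : ℝ) * Δ) ≤ 1 + log (v / u) := by
  have hscaled : ∀ j ∈ t, u / Δ < j ∧ (j : ℝ) ≤ v / Δ := fun j hj =>
    ⟨(div_lt_iff₀ hΔ).2 (ht j hj).1, (le_div_iff₀ hΔ).2 (ht j hj).2⟩
  calc Δ * ∑ j ∈ t, 1 / ((j : ℝ) * Δ) = ∑ j ∈ t, (j : ℝ)⁻¹ := by
        rw [mul_sum]; refine sum_congr rfl fun j _ => ?_; field_simp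
    _ ≤ 1 + log (v / Δ / (u / Δ)) :=
        sum_inv_le_one_add_log_div (by positivity) (by gcongr) hscaled
    _ = 1 + log (v / u) := by field_simp

theorem mul_sum_abs_le_of_three_regimes {A ρ Δ δ R : ℝ} {n : ℕ} {k : ℕ → ℝ} (hA : 0 ≤ A)
    (hρ : 0 < ρ) (hΔ : 0 < Δ) (hδ : 0 < δ) (hδR : δ ≤ R)
    (hk₁ : ∀ j < n, |k j| ≤ A / δ)
    (hk₂ : ∀ j, 1 ≤ j → j < n → |k j| ≤ A * (1 / ((j : ℝ) * Δ) + 1))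
    (hk₃ : ∀ j < n, |k j| ≤ A / δ ^ 2 * exp (-ρ * j * Δ)) :
    Δ * ∑ j ∈ range n, |k j| ≤ A * (1 + Δ / δ) + (A * (1 + log (R / δ)) + A * (R - δ + Δ))
      + A / δ ^ 2 * (exp (-ρ * R) * (1 / ρ + Δ)) := by
  set near := (range n).filter fun j : ℕ => (j : ℝ) * Δ ≤ δ
  set middle := (range n).filter fun j : ℕ => δ < (j : ℝ) * Δ ∧ (j : ℝ) * Δ ≤ R
  set far := (range n).filter fun j : ℕ => R < (j : ℝ) * Δ
  have hsplit : ∑ j ∈ range n, |k j| ≤ ∑ j ∈ near, A / δ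
      + ∑ j ∈ middle, A * (1 / ((j : ℝ) * Δ) + 1) + ∑ j ∈ far, A / δ ^ 2 * exp (-ρ * j * Δ) := by
    simp only [near, middle, far, sum_filter, ← sum_add_distrib]
    refine sum_le_sum fun j hj => ?_
    have hjn := mem_range.1 hj
    rcases le_or_gt ((j : ℝ) * Δ) δ with hnear | hδj
    · have hnot_far : ¬ R < (j : ℝ) * Δ := by linarith
      simp only [hnear, not_lt.2 hnear, hnot_far, if_true, if_false, false_and]
      linarith [hk₁ j hjn]
    have hj₁ : 1 ≤ j := Nat.one_le_iff_ne_zero.2 fun h0 => by simp [h0] at hδj; linarith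
    rcases le_or_gt ((j : ℝ) * Δ) R with hmid | hfar
    · simp only [not_le.2 hδj, hδj, hmid, not_lt.2 hmid, if_true, if_false, and_self]
      linarith [hk₂ j hj₁ hjn]
    · simp only [not_le.2 hδj, not_le.2 hfar, hfar, if_true, if_false, and_false]
      linarith [hk₃ j hjn]
  have hnear : Δ * ∑ j ∈ near, A / δ ≤ A * (1 + Δ / δ) := by
    have hcard := natCast_card_mul_le_of_forall_mem_Icc (t := near) hΔ le_rfl hδ.le
      fun j hj => ⟨by positivity, (mem_filter.1 hj).2⟩
    calc Δ * ∑ j ∈ near, A / δ = A / δ * (#near * Δ) := by rw [sum_const, nsmul_eq_mul]; ring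
      _ ≤ A / δ * (δ - 0 + Δ) := by gcongr
      _ = A * (1 + Δ / δ) := by field_simp; ring
  have hmiddle : Δ * ∑ j ∈ middle, A * (1 / ((j : ℝ) * Δ) + 1)
      ≤ A * (1 + log (R / δ)) + A * (R - δ + Δ) := by
    have hmem : ∀ j ∈ middle, δ < (j : ℝ) * Δ ∧ (j : ℝ) * Δ ≤ R := fun j hj => (mem_filter.1 hj).2
    have hinv := mul_sum_inv_mul_le_one_add_log_div hΔ hδ hδR hmem
    have hcard := natCast_card_mul_le_of_forall_mem_Icc hΔ hδ.le hδR
      fun j hj => ⟨(hmem j hj).1.le, (hmem j hj).2⟩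
    calc Δ * ∑ j ∈ middle, A * (1 / ((j : ℝ) * Δ) + 1)
        = A * (Δ * ∑ j ∈ middle, 1 / ((j : ℝ) * Δ)) + A * (#middle * Δ) := by
          rw [← mul_sum, sum_add_distrib, sum_const, nsmul_eq_mul, mul_one]; ring
      _ ≤ A * (1 + log (R / δ)) + A * (R - δ + Δ) := by gcongr
  have hfar : Δ * ∑ j ∈ far, A / δ ^ 2 * exp (-ρ * j * Δ)
      ≤ A / δ ^ 2 * (exp (-ρ * R) * (1 / ρ + Δ)) := by
    rw [← mul_sum, mul_left_comm]
    exact mul_le_mul_of_nonneg_left (mul_sum_exp_neg_le_of_lt hρ hΔ (hδ.le.trans hδR)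
      fun j hj => (mem_filter.1 hj).2) (by positivity)
  have := mul_le_mul_of_nonneg_left hsplit hΔ.le
  rw [mul_add, mul_add] at this
  linarith

theorem mul_sum_abs_le_of_covariance_bounds {A ρ Δ δ : ℝ} {n : ℕ} {k : ℕ → ℝ} (hA : 0 ≤ A)
    (hρ : 0 < ρ) (hΔ : 0 < Δ) (hδ₀ : 0 < δ) (hδ₁ : δ < 1)
    (hk₁ : ∀ j < n, |k j| ≤ A / δ)
    (hk₂ : ∀ j, 1 ≤ j → j < n → |k j| ≤ A * (1 / ((j : ℝ) * Δ) + 1))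
    (hk₃ : ∀ j < n, |k j| ≤ A / δ ^ 2 * exp (-ρ * j * Δ)) :
    Δ * ∑ j ∈ range n, |k j| ≤ 4 * A * (1 + 1 / ρ) * (1 + -log δ + Δ / δ) := by
  set L := -log δ
  have hL : 0 ≤ L := neg_nonneg.2 (log_nonpos hδ₀.le hδ₁.le)
  set R := δ + 2 * L / ρ
  have hRδ : R - δ = 2 * L / ρ := by ring
  have hδR : δ ≤ R := by linarith [show 0 ≤ 2 * L / ρ by positivity]
  have hexp : exp (-ρ * R) ≤ δ ^ 2 := calc
    exp (-ρ * R) ≤ exp (2 * log δ) := by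
      rw [exp_le_exp, show -ρ * R = -(ρ * δ) + 2 * log δ by simp only [R, L]; field_simp; ring]
      linarith [mul_pos hρ hδ₀]
    _ = δ ^ 2 := by
      rw [show 2 * log δ = log (δ ^ 2) by rw [log_pow]; norm_num, exp_log (by positivity)]
  have hlog : log (R / δ) ≤ 2 * L / ρ + L := by
    rw [log_div (hδ₀.trans_le hδR).ne' hδ₀.ne']
    linarith [log_le_sub_one_of_pos (hδ₀.trans_le hδR)]
  have hfar : A / δ ^ 2 * (exp (-ρ * R) * (1 / ρ + Δ)) ≤ A * (1 / ρ + Δ) := by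
    rw [← mul_assoc]
    gcongr
    calc A / δ ^ 2 * exp (-ρ * R) ≤ A / δ ^ 2 * δ ^ 2 := by gcongr
      _ = A := by field_simp
  have hΔδ : Δ ≤ Δ / δ := le_div_self hΔ.le hδ₀ hδ₁.le
  calc Δ * ∑ j ∈ range n, |k j|
      ≤ A * (1 + Δ / δ) + (A * (1 + log (R / δ)) + A * (R - δ + Δ))
        + A / δ ^ 2 * (exp (-ρ * R) * (1 / ρ + Δ)) :=
        mul_sum_abs_le_of_three_regimes hA hρ hΔ hδ₀ hδR hk₁ hk₂ hk₃
    _ ≤ A * (1 + Δ / δ) + (A * (1 + (2 * L / ρ + L)) + A * (2 * L / ρ + Δ))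
        + A * (1 / ρ + Δ) := by
        rw [hRδ]; gcongr
    _ ≤ 4 * A * (1 + 1 / ρ) * (1 + L + Δ / δ) := by
        have hslack : 0 ≤ 2 + 3 / ρ + 3 * L + 2 * (Δ / δ - Δ) + Δ / δ + 4 / ρ * (Δ / δ) := by
          have : 0 ≤ 3 / ρ := by positivity
          have : 0 ≤ Δ / δ := by positivity
          have : 0 ≤ 4 / ρ * (Δ / δ) := by positivity
          linarith
        have hdiff : 4 * A * (1 + 1 / ρ) * (1 + L + Δ / δ)
            - (A * (1 + Δ / δ) + (A * (1 + (2 * L / ρ + L)) + A * (2 * L / ρ + Δ))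
              + A * (1 / ρ + Δ))
            = A * (2 + 3 / ρ + 3 * L + 2 * (Δ / δ - Δ) + Δ / δ + 4 / ρ * (Δ / δ)) := by ring
        linarith [mul_nonneg hA hslack]

/-- Deterministic summation core of the variance bound in dimension `d = 2`: if `k(j)`
satisfies the three covariance bounds (i)–(iii), then
`(Δ²/T²)·∑_{j<n} (n − j)|k(j)| ≤ (C/T)(1 + |log h₁| + |log h₂|) + (C/T)·Δ/(h₁h₂)`
with `T = nΔ`, for constants `C, T₀` depending only on `A, ρ`. -/
theorem discrete_variance_sum_bound_dim2 (A ρ : ℝ) (hA : 0 < A) (hρ : 0 < ρ) :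
    ∃ C > (0:ℝ), ∃ T0 > (0:ℝ),
      ∀ (n : ℕ), 1 ≤ n → ∀ (Δ : ℝ), 0 < Δ →
      ∀ (h₁ h₂ : ℝ), h₁ ∈ Set.Ioo (0:ℝ) 1 → h₂ ∈ Set.Ioo (0:ℝ) 1 →
      ∀ (k : ℕ → ℝ),
        (∀ j, j < n → |k j| ≤ A / (h₁ * h₂)) →
        (∀ j, 1 ≤ j → j < n → |k j| ≤ A * (1 / ((j : ℝ) * Δ) + 1)) →
        (∀ j, j < n → |k j| ≤ (A / (h₁ * h₂) ^ 2) * Real.exp (-ρ * (j : ℝ) * Δ)) →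
        T0 ≤ (n : ℝ) * Δ →
        Δ ^ 2 / ((n : ℝ) * Δ) ^ 2 * ∑ j ∈ Finset.range n, ((n : ℝ) - (j : ℝ)) * |k j|
          ≤ C / ((n : ℝ) * Δ) * (1 + |Real.log h₁| + |Real.log h₂|)
            + C / ((n : ℝ) * Δ) * (Δ / (h₁ * h₂)) := by
  refine ⟨4 * A * (1 + 1 / ρ), by positivity, 1, one_pos, ?_⟩
  intro n hn Δ hΔ h₁ h₂ ⟨h₁₀, h₁₁⟩ ⟨h₂₀, h₂₁⟩ k hk₁ hk₂ hk₃ _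
  have hn₀ : (0 : ℝ) < n := by exact_mod_cast hn
  have hδ₁ : h₁ * h₂ < 1 := by nlinarith
  have hlog : -log (h₁ * h₂) = |log h₁| + |log h₂| := by
    rw [log_mul h₁₀.ne' h₂₀.ne', abs_of_neg (log_neg h₁₀ h₁₁), abs_of_neg (log_neg h₂₀ h₂₁)]
    ring
  have hweights : ∑ j ∈ range n, ((n : ℝ) - j) * |k j| ≤ n * ∑ j ∈ range n, |k j| := by
    rw [mul_sum]
    exact sum_le_sum fun j _ =>
      mul_le_mul_of_nonneg_right (by linarith [j.cast_nonneg (α := ℝ)]) (abs_nonneg _)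
  calc Δ ^ 2 / ((n : ℝ) * Δ) ^ 2 * ∑ j ∈ range n, ((n : ℝ) - j) * |k j|
      ≤ Δ ^ 2 / ((n : ℝ) * Δ) ^ 2 * (n * ∑ j ∈ range n, |k j|) := by gcongr
    _ = (Δ * ∑ j ∈ range n, |k j|) / (n * Δ) := by field_simp
    _ ≤ 4 * A * (1 + 1 / ρ) * (1 + -log (h₁ * h₂) + Δ / (h₁ * h₂)) / (n * Δ) := by
        gcongr ?_ / _
        exact mul_sum_abs_le_of_covariance_bounds hA.le hρ hΔ (mul_pos h₁₀ h₂₀) hδ₁ hk₁ hk₂ hk₃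
    _ = 4 * A * (1 + 1 / ρ) / (n * Δ) * (1 + |log h₁| + |log h₂|)
          + 4 * A * (1 + 1 / ρ) / (n * Δ) * (Δ / (h₁ * h₂)) := by rw [hlog]; ring
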